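/- Suppose Assumption 1 holds and that, upon each exchange, the base station and the communicating agent update their respective variables via Algorithm 1. Then for every agent i and every time t≥0, the bound τ_i^A(t) − t + ω_i^A(t) ≤ T_i(t) − Δ_H holds. -/

import Mathlib

open scoped Classical ENNReal

noncomputable section

universe u

/-- A weighted graph environment `G(Q) = (Q, E)` with undirected edges and
positive edge weights. -/
structure Env (V : Type u) where
  adj : V → V → Prop
  adj_symm : ∀ u v, adj u v → adj v u
  adj_irrefl : ∀ v, ¬ adj v v
  w : V → V → ℝ
  w_pos : ∀ u v, adj u v → 0 < w u v
  w_symm : ∀ u v, w u v = w v u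

variable {V : Type u}

/-- `PathIn G S p` : `p` is a (nonempty) walk of `G` all of whose vertices lie in `S`. -/
def PathIn (G : Env V) (S : Set V) : List V → Prop
  | [] => False
  | [v] => v ∈ S
  | u :: v :: rest => u ∈ S ∧ G.adj u v ∧ PathIn G S (v :: rest)

/-- Total weighted length of a walk. -/
def pathLen (G : Env V) : List V → ℝ≥0∞
  | [] => 0
  | [_] => 0
  | u :: v :: rest => ENNReal.ofReal (G.w u v) + pathLen G (v :: rest)

/-- Weighted shortest-path distance between two vertices inside the subgraph of `G`
induced on `S` (`∞` if no connecting path inside `S` exists). -/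
def dIn (G : Env V) (S : Set V) (a b : V) : ℝ≥0∞ :=
  sInf {L : ℝ≥0∞ | ∃ p : List V, PathIn G S p ∧ p.head? = some a ∧
    p.getLast? = some b ∧ pathLen G p = L}

/-- Length of a shortest path inside the subgraph induced on `S` from `a` to the set `B`. -/
def dInSet (G : Env V) (S : Set V) (a : V) (B : Set V) : ℝ≥0∞ :=
  ⨅ b ∈ B, dIn G S a b

/-- A subset `S` is connected if its induced subgraph is connected. -/
def ConnIn (G : Env V) (S : Set V) : Prop :=
  ∀ a ∈ S, ∀ b ∈ S, ∃ p : List V, PathIn G S p ∧ p.head? = some a ∧ p.getLast? = some b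

/-- A vertex `k` is adjacent to a set `S`. -/
def AdjTo (G : Env V) (k : V) (S : Set V) : Prop :=
  k ∉ S ∧ ∃ v ∈ S, G.adj k v

/-- An `m`-covering of the vertex set. -/
def IsCovering {m : ℕ} (P : Fin m → Set V) : Prop :=
  (∀ v : V, ∃ i, v ∈ P i) ∧ ∀ i, (P i).Nonempty

/-- An `m`-partition of the vertex set. -/
def IsPartition {m : ℕ} (P : Fin m → Set V) : Prop :=
  IsCovering P ∧ ∀ i j : Fin m, i ≠ j → P i ∩ P j = ∅

/-- Conditions (1) and (2) of the additive-subset definition (together with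
connectivity of the candidate set `S`). -/
def AddCond {m : ℕ} (G : Env V) (s : Fin m → ℝ) (P : Fin m → Set V) (c : Fin m → V)
    (T : Fin m → ℝ) (i : Fin m) (Pid : Set V) (k : V) (S : Set V) : Prop :=
  ConnIn G S ∧ Pid ⊆ S ∧
    ∀ j : Fin m, j ≠ i → ∀ h ∈ S ∩ P j,
      T j = 0 ∧
      ENNReal.ofReal (1 / s i) * dIn G S h k < ENNReal.ofReal (1 / s j) * dIn G (P j) h (c j)

/-- `S` is *the* additive subset `P_i^add(k)` : the largest connected subset
satisfying conditions (1) and (2); it contains every subset satisfying them. -/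
def IsAddSet {m : ℕ} (G : Env V) (s : Fin m → ℝ) (P : Fin m → Set V) (c : Fin m → V)
    (T : Fin m → ℝ) (i : Fin m) (Pid : Set V) (k : V) (S : Set V) : Prop :=
  AddCond G s P c T i Pid k S ∧ ∀ S' : Set V, AddCond G s P c T i Pid k S' → S' ⊆ S

/-- The coverage cost `H(c, P, t)`. -/
def Hcost {m : ℕ} [Fintype V] (G : Env V) (s : Fin m → ℝ) (Φ : V → ℝ → ℝ)
    (c : Fin m → V) (P : Fin m → Set V) (t : ℝ) : ℝ≥0∞ :=
  ∑ k : V,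
    sInf {x : ℝ≥0∞ | ∃ i : Fin m, k ∈ P i ∧ x = ENNReal.ofReal (1 / s i) * dIn G (P i) k (c i)} *
      ENNReal.ofReal (Φ k t)

/-- The complete state maintained by the base station together with all the
agents' local variables. -/
structure CovState (V : Type u) (m : ℕ) where
  P : Fin m → Set V
  c : Fin m → V
  ID : V → Fin m
  T : Fin m → ℝ
  ω : Fin m → ℝ
  PA : Fin m → Set V
  cA : Fin m → V
  Ppd : Fin m → Set V
  τA : Fin m → ℝ
  ωA : Fin m → ℝ

namespace CovState

variable {m : ℕ}

/-- `P_i^ID`, the set of vertices whose identifier equals `i`. -/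
def Pid (σ : CovState V m) (i : Fin m) : Set V := {k | σ.ID k = i}

/-- The local likelihood function `Φ_i^A`. -/
def ΦA (σ : CovState V m) (Φ : V → ℝ → ℝ) (i : Fin m) (k : V) (t : ℝ) : ℝ :=
  if k ∈ σ.PA i ∧ (σ.τA i ≤ t - σ.ωA i ∨ k ∉ σ.Ppd i) then Φ k t else 0

/-- The prohibited region `Proh_i(t)`. -/
def Proh (σ : CovState V m) (i : Fin m) (t : ℝ) : Set V :=
  {k ∈ σ.PA i | t - σ.ωA i < σ.τA i ∧ k ∈ σ.Ppd i}

/-- Continuous (flow) evolution of the state for `δ` time units: only the timers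
change, each decreasing at unit rate until reaching `0`. -/
def decay (σ : CovState V m) (δ : ℝ) : CovState V m :=
  { σ with T := fun i => max (σ.T i - δ) 0 }

end CovState

/-- The trivial branch of Algorithm 1 (`T_i > 0` and `P_i^* = P_i`): only the
timing variables of the communicating agent are touched. -/
def NoopUpdate {m : ℕ} (i : Fin m) (t0 : ℝ) (σ σ' : CovState V m) : Prop :=
  σ' = { σ with τA := Function.update σ.τA i (σ.τA i - t0 + σ.ω i),
                ωA := Function.update σ.ωA i t0,
                ω := Function.update σ.ω i t0 }

/-- The main branch of Algorithm 1 (together with the timer update, Algorithm 2),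
executed upon an exchange between the base station and agent `i` at time `t0`. -/
def FullUpdate {m : ℕ} [Fintype V] (G : Env V) (s : Fin m → ℝ) (Φ : V → ℝ → ℝ)
    (Δbar ΔH : ℝ) (i : Fin m) (t0 : ℝ) (σ σ' : CovState V m) : Prop :=
  ∃ (cstar : V) (Pstar : Set V),
    -- `(cstar, Pstar)` is one of the candidate configurations:
    ((cstar = σ.c i ∧ Pstar = σ.Pid i) ∨
      (cstar ∈ σ.Pid i ∧ IsAddSet G s σ.P σ.c σ.T i (σ.Pid i) cstar Pstar)) ∧
    -- and it minimizes the cost `H` among all candidate configurations: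
    (∀ (k : V) (S : Set V),
      ((k = σ.c i ∧ S = σ.Pid i) ∨
        (k ∈ σ.Pid i ∧ IsAddSet G s σ.P σ.c σ.T i (σ.Pid i) k S)) →
      Hcost G s Φ (Function.update σ.c i cstar) (Function.update σ.P i Pstar) t0 ≤
        Hcost G s Φ (Function.update σ.c i k) (Function.update σ.P i S) t0) ∧
    σ'.P = Function.update σ.P i Pstar ∧
    σ'.PA = Function.update σ.PA i Pstar ∧
    σ'.c = Function.update σ.c i cstar ∧
    σ'.cA = Function.update σ.cA i cstar ∧
    σ'.Ppd = Function.update σ.Ppd i (Pstar \ σ.Pid i) ∧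
    σ'.ω = Function.update σ.ω i t0 ∧
    σ'.ωA = Function.update σ.ωA i t0 ∧
    σ'.ID = (fun k => if k ∈ Pstar then i else σ.ID k) ∧
    (∀ j : Fin m, j ≠ i → (σ.P j ∩ Pstar).Nonempty → σ'.T j = σ.ω j + Δbar - t0) ∧
    (∀ j : Fin m, j ≠ i → ¬(σ.P j ∩ Pstar).Nonempty → σ'.T j = σ.T j) ∧
    -- `T_i := Δ_max^Bf + Δ_H`, where `Δ_max^Bf` is as in Algorithm 2 (max ∅ := 0):
    σ'.T i =
      max
        (sSup {x : ℝ | ∃ k ∈ σ.P i \ Pstar,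
          x = (1 / s i) * (dInSet G (σ.P i) k (Pstar \ (Pstar \ σ.Pid i))).toReal})
        (sSup {x : ℝ | ∃ j : Fin m, j ≠ i ∧ (σ.P j ∩ Pstar).Nonempty ∧
          x = σ.ω j + Δbar +
            sSup {y : ℝ | ∃ k ∈ σ.P j ∩ Pstar,
              y = (1 / s j) * (dInSet G (σ.P j) k (σ.P j \ Pstar)).toReal} - t0}) + ΔH ∧
    -- `τ_i^A := Δ_max^Bf`:
    σ'.τA = Function.update σ.τA i (σ'.T i - ΔH)

/-- The one-to-base-station update of Algorithm 1 performed at time `t0` upon an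
exchange with agent `i`; `σ` is the state just before and `σ'` just after. -/
def UpdateAt {m : ℕ} [Fintype V] (G : Env V) (s : Fin m → ℝ) (Φ : V → ℝ → ℝ)
    (Δbar ΔH : ℝ) (i : Fin m) (t0 : ℝ) (σ σ' : CovState V m) : Prop :=
  (0 < σ.T i ∧ σ.Pid i = σ.P i ∧ NoopUpdate i t0 σ σ') ∨
  (¬(0 < σ.T i ∧ σ.Pid i = σ.P i) ∧ FullUpdate G s Φ Δbar ΔH i t0 σ σ')

/-- Assumption 1 (initialization). -/
def InitOK {m : ℕ} (G : Env V) (ΔH : ℝ) (σ : CovState V m) : Prop :=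
  IsPartition σ.P ∧ (∀ i, ConnIn G (σ.P i)) ∧
    ∀ i : Fin m,
      σ.PA i = σ.P i ∧ σ.P i = σ.Pid i ∧ σ.cA i = σ.c i ∧ σ.c i ∈ σ.P i ∧
      σ.Ppd i = ∅ ∧ σ.T i = 0 ∧ σ.ω i = 0 ∧ σ.ωA i = 0 ∧ σ.τA i = -ΔH

/-- An execution of the asynchronous one-to-base-station coverage scheme:
exchanges occur at the times `etime n` with the agents `eagent n`, successive
exchanges are separated by at least `Δlow`, each agent communicates at least
every `Δ̄` time units, the state is initialized according to Assumption 1,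
flows (only the timers decay) in between exchanges, and jumps according to
Algorithm 1 at each exchange. -/
structure Execution [Fintype V] (G : Env V) (m : ℕ) (s : Fin m → ℝ) (Φ : V → ℝ → ℝ)
    (Δlow Δbar ΔH : ℝ) where
  etime : ℕ → ℝ
  eagent : ℕ → Fin m
  state : ℝ → CovState V m
  s_pos : ∀ i, 0 < s i
  Δlow_pos : 0 < Δlow
  Δbar_pos : 0 < Δbar
  ΔH_pos : 0 < ΔH
  Φ_nonneg : ∀ k t, 0 ≤ Φ k t
  Φ_sum : ∀ t : ℝ, ∑ k : V, Φ k t = 1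
  etime_pos : ∀ n, 0 < etime n
  etime_sep : ∀ n, etime n + Δlow ≤ etime (n + 1)
  persistent : ∀ (i : Fin m) (t : ℝ), 0 ≤ t →
    ∃ n, eagent n = i ∧ t ≤ etime n ∧ etime n ≤ t + Δbar
  init : InitOK G ΔH (state 0)
  flow : ∀ t₁ t₂ : ℝ, 0 ≤ t₁ → t₁ ≤ t₂ →
    (∀ n, ¬(t₁ < etime n ∧ etime n ≤ t₂)) →
    state t₂ = (state t₁).decay (t₂ - t₁)
  jump : ∀ (n : ℕ) (t₁ : ℝ), 0 ≤ t₁ → t₁ < etime n →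
    (∀ p, ¬(t₁ < etime p ∧ etime p < etime n)) →
    UpdateAt G s Φ Δbar ΔH (eagent n) (etime n)
      ((state t₁).decay (etime n - t₁)) (state (etime n))

/-- Twice the sum, over the edges of `G`, of the graph distance between the
endpoints, halved (i.e. the sum over unordered edges). -/
def edgeSum [Fintype V] (G : Env V) : ℝ :=
  (1 / 2) * ∑ p : V × V, if G.adj p.1 p.2 then (dIn G Set.univ p.1 p.2).toReal else 0

/-- `d̄ := max_i (1/s_i) · Σ_{{k1,k2} ∈ E} d_Q(k1,k2)`. -/
def dbar {m : ℕ} [Fintype V] (G : Env V) (s : Fin m → ℝ) : ℝ :=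
  sSup {x : ℝ | ∃ i : Fin m, x = (1 / s i) * edgeSum G}

end

/-!
Write `r_j(t) = τ_j^A - t + ω_j^A` for the prohibition time left to agent `j`. The bound
`r_j ≤ T_j - Δ_H` is proved together with two further invariants: `r_j ≤ -Δ_H` as soon as some
vertex of `P_j` carries another agent's identifier, and `ω_j` is at least the time of every
exchange of `j` so far. Between exchanges `r_j` decreases at unit rate and `T_j` at most at unit
rate. At an exchange with agent `i`, the choice `T_i := Δ_max^Bf + Δ_H`, `τ_i^A := Δ_max^Bf`
makes the bound an equality for `i`. An agent `j` losing vertices to `i` loses them either from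
`P_i^ID`, so that they already carried the identifier `i`, or to an additive subset, which
requires `T_j = 0`; either way `r_j ≤ -Δ_H`, while its new timer `ω_j + Δ̄ - t₀` is nonnegative
because `j` communicated during the last `Δ̄` time units.
-/

namespace CovState

variable {V : Type*} {m : ℕ}

@[simp] lemma decay_τA (σ : CovState V m) (δ : ℝ) : (σ.decay δ).τA = σ.τA := rfl
@[simp] lemma decay_ωA (σ : CovState V m) (δ : ℝ) : (σ.decay δ).ωA = σ.ωA := rfl
@[simp] lemma decay_T (σ : CovState V m) (δ : ℝ) (j : Fin m) :
    (σ.decay δ).T j = max (σ.T j - δ) 0 := rfl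

structure TimingBounds (ΔH : ℝ) (σ : CovState V m) (t : ℝ) : Prop where
  ωA_eq_ω : ∀ j, σ.ωA j = σ.ω j
  le_T : ∀ j, σ.τA j - t + σ.ωA j ≤ σ.T j - ΔH
  le_of_foreign : ∀ j, ∀ k ∈ σ.P j, σ.ID k ≠ j → σ.τA j - t + σ.ωA j ≤ -ΔH

namespace TimingBounds

variable {ΔH t : ℝ} {σ σ' : CovState V m}

theorem decay (h : TimingBounds ΔH σ t) {t' : ℝ} (htt' : t ≤ t') :
    TimingBounds ΔH (σ.decay (t' - t)) t' where
  ωA_eq_ω := h.ωA_eq_ω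
  le_T j := by
    have := h.le_T j
    have := le_max_left (σ.T j - (t' - t)) 0
    simp only [decay_τA, decay_ωA, decay_T]
    linarith
  le_of_foreign j k hk hkj := by
    have := h.le_of_foreign j k hk hkj
    simp only [decay_τA, decay_ωA]
    linarith

theorem noopUpdate (h : TimingBounds ΔH σ t) {i : Fin m} (hPid : σ.Pid i = σ.P i)
    (hu : NoopUpdate i t σ σ') : TimingBounds ΔH σ' t := by
  subst hu
  refine ⟨fun j => ?_, fun j => ?_, fun j k hk hkj => ?_⟩ <;>
    obtain rfl | hji := eq_or_ne j i
  · simp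
  · simpa [Function.update_of_ne hji] using h.ωA_eq_ω j
  · simpa [← h.ωA_eq_ω j] using h.le_T j
  · simpa [Function.update_of_ne hji] using h.le_T j
  · exact absurd (hPid ▸ hk : k ∈ σ.Pid j) hkj
  · simpa [Function.update_of_ne hji] using h.le_of_foreign j k hk hkj

/-- A vertex taken over by agent `i` from agent `j` either already carried the identifier `i`
or lies in an additive subset, which only takes vertices from agents whose timer has run out. -/
theorem le_of_mem_candidate {G : Env V} {s : Fin m → ℝ} (h : TimingBounds ΔH σ t)
    {i j : Fin m} {c : V} {Pstar : Set V}
    (hcand : Pstar = σ.Pid i ∨ IsAddSet G s σ.P σ.c σ.T i (σ.Pid i) c Pstar)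
    (hji : j ≠ i) {k : V} (hk : k ∈ σ.P j ∩ Pstar) :
    σ.τA j - t + σ.ωA j ≤ -ΔH := by
  rcases hcand with rfl | ⟨⟨-, -, hcond⟩, -⟩
  · exact h.le_of_foreign j k hk.1 (hk.2.trans_ne hji.symm)
  · linarith [h.le_T j, (hcond j hji k ⟨hk.2, hk.1⟩).1]

theorem fullUpdate [Fintype V] {G : Env V} {s : Fin m → ℝ} {Φ : V → ℝ → ℝ} {Δbar : ℝ}
    (h : TimingBounds ΔH σ t) {i : Fin m} (hω : ∀ j ≠ i, t - Δbar ≤ σ.ω j)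
    (hu : FullUpdate G s Φ Δbar ΔH i t σ σ') : TimingBounds ΔH σ' t := by
  obtain ⟨c, Pstar, hcand, -, hP, -, -, -, -, hω', hωA', hID, hTsteal, hTkeep, -, hτA'⟩ := hu
  replace hcand : Pstar = σ.Pid i ∨ IsAddSet G s σ.P σ.c σ.T i (σ.Pid i) c Pstar :=
    hcand.imp And.right And.right
  refine ⟨fun j => ?_, fun j => ?_, fun j k hk hkj => ?_⟩ <;>
    obtain rfl | hji := eq_or_ne j i
  · simp [hω', hωA']
  · simpa [hω', hωA', Function.update_of_ne hji] using h.ωA_eq_ω j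
  · simp [hτA', hωA']
  · simp only [hτA', hωA', Function.update_of_ne hji]
    by_cases hsteal : (σ.P j ∩ Pstar).Nonempty
    · obtain ⟨k, hk⟩ := hsteal
      rw [hTsteal j hji ⟨k, hk⟩]
      linarith [h.le_of_mem_candidate hcand hji hk, h.ωA_eq_ω j, hω j hji]
    · rw [hTkeep j hji hsteal]
      exact h.le_T j
  · simp only [hP, hID, Function.update_self] at hk hkj
    exact absurd (if_pos hk) hkj
  · rw [hP, Function.update_of_ne hji] at hk
    simp only [hτA', hωA', Function.update_of_ne hji]
    by_cases hkP : k ∈ Pstar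
    · exact h.le_of_mem_candidate hcand hji ⟨hk, hkP⟩
    · exact h.le_of_foreign j k hk (by simpa [hID, hkP] using hkj)

theorem update [Fintype V] {G : Env V} {s : Fin m → ℝ} {Φ : V → ℝ → ℝ} {Δbar : ℝ}
    (h : TimingBounds ΔH σ t) {i : Fin m} (hω : ∀ j ≠ i, t - Δbar ≤ σ.ω j)
    (hu : UpdateAt G s Φ Δbar ΔH i t σ σ') : TimingBounds ΔH σ' t := by
  rcases hu with ⟨-, hPid, hu⟩ | ⟨-, hu⟩
  · exact h.noopUpdate hPid hu
  · exact h.fullUpdate hω hu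

end TimingBounds

end CovState

theorem UpdateAt.ω_eq {V : Type*} [Fintype V] {m : ℕ} {G : Env V} {s : Fin m → ℝ}
    {Φ : V → ℝ → ℝ} {Δbar ΔH : ℝ} {i : Fin m} {t : ℝ} {σ σ' : CovState V m}
    (hu : UpdateAt G s Φ Δbar ΔH i t σ σ') : σ'.ω = Function.update σ.ω i t := by
  rcases hu with ⟨-, -, rfl⟩ | ⟨-, _, _, -, -, -, -, -, -, -, hω, -⟩
  · rfl
  · exact hω

namespace Execution

variable {V : Type*} [Fintype V] {G : Env V} {m : ℕ} {s : Fin m → ℝ} {Φ : V → ℝ → ℝ}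
  {Δlow Δbar ΔH : ℝ} (E : Execution G m s Φ Δlow Δbar ΔH)

theorem etime_strictMono : StrictMono E.etime :=
  strictMono_nat_of_lt_succ fun n =>
    (lt_add_of_pos_right _ E.Δlow_pos).trans_le (E.etime_sep n)

theorem mul_le_etime (n : ℕ) : n * Δlow ≤ E.etime n := by
  induction n with
  | zero => simpa using (E.etime_pos 0).le
  | succ n ih =>
    push_cast
    linarith [E.etime_sep n]

theorem exists_lt_etime (t : ℝ) : ∃ n, t < E.etime n := by
  obtain ⟨n, hn⟩ := exists_nat_gt (t / Δlow)
  refine ⟨n, lt_of_lt_of_le ?_ (E.mul_le_etime n)⟩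
  rwa [div_lt_iff₀ E.Δlow_pos] at hn

structure ExchangeRecord (σ : CovState V m) (t : ℝ) : Prop where
  ω_nonneg : ∀ j, 0 ≤ σ.ω j
  etime_le_ω : ∀ n, E.etime n ≤ t → E.etime n ≤ σ.ω (E.eagent n)

namespace ExchangeRecord

variable {E} {σ σ' : CovState V m} {t₁ t₂ : ℝ}

theorem decay (h : E.ExchangeRecord σ t₁) (hgap : ∀ n, ¬(t₁ < E.etime n ∧ E.etime n ≤ t₂))
    (δ : ℝ) : E.ExchangeRecord (σ.decay δ) t₂ where
  ω_nonneg := h.ω_nonneg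
  etime_le_ω n hn := h.etime_le_ω n (not_lt.1 fun hlt => hgap n ⟨hlt, hn⟩)

theorem sub_le_ω (h : E.ExchangeRecord σ t₁) {n : ℕ}
    (hgap : ∀ p, ¬(t₁ < E.etime p ∧ E.etime p < E.etime n)) {j : Fin m} (hj : j ≠ E.eagent n) :
    E.etime n - Δbar ≤ σ.ω j := by
  rcases le_or_gt (E.etime n - Δbar) 0 with hneg | hpos
  · exact hneg.trans (h.ω_nonneg j)
  obtain ⟨p, rfl, hp, hpt⟩ := E.persistent j _ hpos.le
  have hpn : E.etime p < E.etime n :=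
    lt_of_le_of_ne (by linarith) fun he => hj (by rw [E.etime_strictMono.injective he])
  exact hp.trans (h.etime_le_ω p (not_lt.1 fun hlt => hgap p ⟨hlt, hpn⟩))

theorem update (h : E.ExchangeRecord σ t₁) {n : ℕ}
    (hgap : ∀ p, ¬(t₁ < E.etime p ∧ E.etime p < E.etime n))
    (hω : σ'.ω = Function.update σ.ω (E.eagent n) (E.etime n)) :
    E.ExchangeRecord σ' (E.etime n) where
  ω_nonneg j := by
    rw [hω]
    obtain rfl | hj := eq_or_ne j (E.eagent n)
    · simpa using (E.etime_pos n).le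
    · simpa [Function.update_of_ne hj] using h.ω_nonneg j
  etime_le_ω p hp := by
    rw [hω]
    obtain hj | hj := eq_or_ne (E.eagent p) (E.eagent n)
    · simpa [hj] using hp
    rw [Function.update_of_ne hj]
    have hpn : E.etime p < E.etime n :=
      lt_of_le_of_ne hp fun he => hj (by rw [E.etime_strictMono.injective he])
    exact h.etime_le_ω p (not_lt.1 fun hlt => hgap p ⟨hlt, hpn⟩)

end ExchangeRecord

def Invariant (t : ℝ) : Prop :=
  (E.state t).TimingBounds ΔH t ∧ E.ExchangeRecord (E.state t) t

theorem invariant_zero : E.Invariant 0 := by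
  obtain ⟨-, -, hinit⟩ := E.init
  refine ⟨⟨fun j => ?_, fun j => ?_, fun j k hk hkj => ?_⟩,
    ⟨fun j => ?_, fun n hn => absurd hn (E.etime_pos n).not_ge⟩⟩ <;>
    obtain ⟨-, hPid, -, -, -, hT, hω, hωA, hτA⟩ := hinit j
  · rw [hωA, hω]
  · rw [hτA, hωA, hT]
    linarith
  · exact absurd (hPid ▸ hk : k ∈ (E.state 0).Pid j) hkj
  · exact hω.ge

theorem invariant_flow {t₁ t₂ : ℝ} (h : E.Invariant t₁) (ht₁ : 0 ≤ t₁) (ht : t₁ ≤ t₂)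
    (hgap : ∀ n, ¬(t₁ < E.etime n ∧ E.etime n ≤ t₂)) : E.Invariant t₂ := by
  rw [Invariant, E.flow t₁ t₂ ht₁ ht hgap]
  exact ⟨h.1.decay ht, h.2.decay hgap _⟩

theorem invariant_jump {t₁ : ℝ} {n : ℕ} (h : E.Invariant t₁) (ht₁ : 0 ≤ t₁)
    (hlt : t₁ < E.etime n) (hgap : ∀ p, ¬(t₁ < E.etime p ∧ E.etime p < E.etime n)) :
    E.Invariant (E.etime n) :=
  have hu := E.jump n t₁ ht₁ hlt hgap
  ⟨(h.1.decay hlt.le).update (fun _ hj => h.2.sub_le_ω hgap hj) hu, h.2.update hgap hu.ω_eq⟩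

theorem invariant_etime (n : ℕ) : E.Invariant (E.etime n) := by
  induction n with
  | zero =>
    refine E.invariant_jump E.invariant_zero le_rfl (E.etime_pos 0) fun p hp => ?_
    exact hp.2.not_ge (E.etime_strictMono.monotone p.zero_le)
  | succ n ih =>
    refine E.invariant_jump ih (E.etime_pos n).le (E.etime_strictMono n.lt_succ_self)
      fun p ⟨hnp, hpn⟩ => ?_
    have := E.etime_strictMono.lt_iff_lt.1 hnp
    have := E.etime_strictMono.lt_iff_lt.1 hpn
    omega

theorem invariant {t : ℝ} (ht : 0 ≤ t) : E.Invariant t := by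
  classical
  have hex := E.exists_lt_etime t
  obtain ⟨n, htn, hmin⟩ : ∃ n, t < E.etime n ∧ ∀ p < n, E.etime p ≤ t :=
    ⟨Nat.find hex, Nat.find_spec hex, fun p hp => not_lt.1 (Nat.find_min hex hp)⟩
  cases n with
  | zero =>
    refine E.invariant_flow E.invariant_zero le_rfl ht fun p hp => ?_
    exact hp.2.not_gt (htn.trans_le (E.etime_strictMono.monotone p.zero_le))
  | succ n =>
    refine E.invariant_flow (E.invariant_etime n) (E.etime_pos n).le (hmin n n.lt_succ_self)
      fun p ⟨hnp, hpt⟩ => ?_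
    have hnp := E.etime_strictMono.lt_iff_lt.1 hnp
    exact hpt.not_gt (htn.trans_le (E.etime_strictMono.monotone hnp))

end Execution

theorem timing_variable_bound_general {V : Type*} [Fintype V] {m : ℕ}
    (G : Env V) (s : Fin m → ℝ) (Φ : V → ℝ → ℝ) (Δlow Δbar ΔH : ℝ)
    (E : Execution G m s Φ Δlow Δbar ΔH) :
    ∀ (i : Fin m) (t : ℝ), 0 ≤ t →
      (E.state t).τA i - t + (E.state t).ωA i ≤ (E.state t).T i - ΔH :=
  fun i _ ht => (E.invariant ht).1.le_T i

/-- timing-variable bound.  Under Assumption 1 and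
Algorithm 1 updates, for every agent `i` and every time `t ≥ 0`,
`τ_i^A(t) − t + ω_i^A(t) ≤ T_i(t) − Δ_H`. -/
theorem timing_variable_bound {V : Type*} [Fintype V] [DecidableEq V] {m : ℕ}
    (G : Env V) (s : Fin m → ℝ) (Φ : V → ℝ → ℝ) (Δlow Δbar ΔH : ℝ)
    (E : Execution G m s Φ Δlow Δbar ΔH) :
    ∀ (i : Fin m) (t : ℝ), 0 ≤ t →
      (E.state t).τA i - t + (E.state t).ωA i ≤ (E.state t).T i - ΔH :=
  timing_variable_bound_general G s Φ Δlow Δbar ΔH E
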